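/- For any tagged pentatope t, the multiset of two children produced by applying the bisection rule to t equals the multiset of two children produced by applying the bisection rule to its reflection t_R. -/
import Mathlib


/-- A tagged pentatope: an ordered 5-tuple of vertices together with a type γ ∈ {0,1,2,3}. -/
structure TP (V : Type*) where
  v : Fin 5 → V
  γ : Fin 4

/-- The vertex permutation used in Stevenson's reflection, depending on the type. -/
def refPerm (γ : Fin 4) : Fin 5 → Fin 5 :=
  if γ = 0 then ![4, 3, 2, 1, 0]
  else if γ = 1 then ![4, 1, 3, 2, 0]
  else ![4, 1, 2, 3, 0]

/-- The reflection of a tagged pentatope. -/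
def TP.reflect {V : Type*} (t : TP V) : TP V := ⟨t.v ∘ refPerm t.γ, t.γ⟩

variable {V : Type*} [AddCommGroup V] [Module ℝ V]

/-- The midpoint x' = (x₀ + x₄)/2 of the refinement edge. -/
noncomputable def TP.mid (t : TP V) : V := midpoint ℝ (t.v 0) (t.v 4)

/-- First child of the bisection rule. -/
noncomputable def TP.child1 (t : TP V) : TP V :=
  ⟨![t.v 0, t.mid, t.v 1, t.v 2, t.v 3], t.γ + 1⟩

/-- Second child of the bisection rule. -/
noncomputable def TP.child2 (t : TP V) : TP V :=
  ⟨if t.γ = 0 then ![t.v 4, t.mid, t.v 3, t.v 2, t.v 1]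
    else if t.γ = 1 then ![t.v 4, t.mid, t.v 1, t.v 3, t.v 2]
    else ![t.v 4, t.mid, t.v 1, t.v 2, t.v 3], t.γ + 1⟩


lemma reflect_mid (t : TP V) : t.reflect.mid = t.mid := by
  obtain ⟨v, γ⟩ := t
  fin_cases γ <;>
    simp [TP.mid, TP.reflect, refPerm, midpoint_comm]

lemma reflect_child1 (t : TP V) : t.reflect.child1 = t.child2 := by
  have hm := reflect_mid t
  obtain ⟨v, γ⟩ := t
  fin_cases γ <;>
  · refine TP.mk.injEq _ _ _ _ ▸ ⟨?_, rfl⟩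
    funext i
    fin_cases i <;>
      simp_all [TP.child1, TP.child2, TP.reflect, refPerm]

lemma reflect_child2 (t : TP V) : t.reflect.child2 = t.child1 := by
  have hm := reflect_mid t
  obtain ⟨v, γ⟩ := t
  fin_cases γ <;>
  · refine TP.mk.injEq _ _ _ _ ▸ ⟨?_, rfl⟩
    funext i
    fin_cases i <;>
      simp_all [TP.child1, TP.child2, TP.reflect, refPerm]

/-- Bisecting a tagged pentatope and bisecting its reflection produce the
same unordered pair (multiset) of children. -/
theorem bisect_reflect_same_children (t : TP V) :
    ({t.child1, t.child2} : Multiset (TP V)) =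
      ({t.reflect.child1, t.reflect.child2} : Multiset (TP V)) := by
  have hc1 : t.reflect.child1 = t.child2 := reflect_child1 t
  have hc2 : t.reflect.child2 = t.child1 := reflect_child2 t
  rw [hc1, hc2, Multiset.pair_comm]
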